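/- arXiv:1903.11761 — 2 statements merged into one kernel-verified Lean document; each statement's English description precedes it below -/
import Mathlib

section
/- Let x ∈ Ω be a state with φ(x) = 𝟙. Then in the Q2R dynamics: (x, x) and (-x, -x) are two distinct fixed points of F, and the configuration (x, -x) has minimal period 2 under F, with F(x, -x) = (-x, x) and F(-x, x) = (x, -x). -/
/-- A site of the `L × L` toroidal lattice. -/
abbrev Site (L : ℕ) := ZMod L × ZMod L

/-- The set `Ω` of states: functions on the lattice with values in `{-1, 1}`. -/
def Omega (L : ℕ) := {x : Site L → ℤ // ∀ k, x k = 1 ∨ x k = -1}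

namespace Q2R

variable {L : ℕ}

/-- The sum of the four von Neumann neighbors of site `k`. -/
def nbhdSum (x : Site L → ℤ) (k : Site L) : ℤ :=
  x (k + (1, 0)) + x (k - (1, 0)) + x (k + (0, 1)) + x (k - (0, 1))

/-- The map `φ : Ω → Ω`, detecting null neighborhoods. -/
def phi (x : Omega L) : Omega L :=
  ⟨fun k => if nbhdSum x.1 k = 0 then -1 else 1, fun k => by
    by_cases h : nbhdSum x.1 k = 0 <;> simp [h]⟩

/-- Hadamard (pointwise) product `x ⊙ y`. -/
def had (x y : Omega L) : Omega L :=
  ⟨fun k => x.1 k * y.1 k, fun k => by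
    rcases x.2 k with h | h <;> rcases y.2 k with h' | h' <;> simp [h, h']⟩

/-- The constant state `𝟙`. -/
def one : Omega L := ⟨fun _ => 1, fun _ => Or.inl rfl⟩

/-- Negation: `-x = (-𝟙) ⊙ x`. -/
def neg (x : Omega L) : Omega L := had ⟨fun _ => -1, fun _ => Or.inr rfl⟩ x

/-- The Q2R map `F(x, y) = (y ⊙ φ(x), x)`. -/
def F : Omega L × Omega L → Omega L × Omega L := fun p => (had p.2 (phi p.1), p.1)

/-- The configuration `p` has minimal period `T ≥ 1` under `F`. -/
def IsMinPeriod (p : Omega L × Omega L) (T : ℕ) : Prop :=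
  F^[T] p = p ∧ ∀ t, 0 < t → t < T → F^[t] p ≠ p

/-- The orbit of a configuration under `F`. -/
def orbit (p : Omega L × Omega L) : Set (Omega L × Omega L) :=
  {q | ∃ t : ℕ, F^[t] p = q}

end Q2R


namespace Q2R

lemma nbhdSum_ne_of_phi_one {L : ℕ} {x : Omega L} (hx : phi x = one) (k : Site L) :
    nbhdSum x.1 k ≠ 0 := by
  intro h
  have := congrArg (fun z => z.1 k) hx
  simp [phi, one, h] at this

lemma phi_neg_of_phi_one {L : ℕ} {x : Omega L} (hx : phi x = one) :
    phi (neg x) = one := by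
  apply Subtype.ext
  funext k
  have h := nbhdSum_ne_of_phi_one hx k
  have hs : nbhdSum (neg x).1 k = -(nbhdSum x.1 k) := by
    simp [neg, had, nbhdSum]; ring
  simp [phi, one, hs, h]

lemma had_one {L : ℕ} (x : Omega L) : had x (one : Omega L) = x := by
  apply Subtype.ext; funext k; simp [had, one]

lemma neg_ne {L : ℕ} (hL : 0 < L) (x : Omega L) : x ≠ neg x := by
  intro h
  have : Nonempty (Site L) := by
    haveI : NeZero L := ⟨by omega⟩
    exact ⟨(0, 0)⟩
  obtain ⟨k⟩ := this
  have := congrArg (fun z => z.1 k) h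
  rcases x.2 k with h1 | h1 <;> simp [neg, had, h1] at this <;> omega

end Q2R

open Q2R

/-- If `φ(x) = 𝟙` then `(x,x)` and `(-x,-x)` are two distinct fixed points and
`(x,-x)` has minimal period 2, with `F(x,-x) = (-x,x)` and `F(-x,x) = (x,-x)`. -/
theorem q2r_fp_and_p2_from_phi_one (L : ℕ) (hL : 2 ≤ L) (hE : Even L)
    (x : Omega L) (hx : phi x = one) :
    F (x, x) = (x, x) ∧ F (neg x, neg x) = (neg x, neg x) ∧
      ((x, x) : Omega L × Omega L) ≠ (neg x, neg x) ∧
      F (x, neg x) = (neg x, x) ∧ F (neg x, x) = (x, neg x) ∧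
      IsMinPeriod (x, neg x) 2 := by
  have hL0 : 0 < L := by omega
  have hphin := phi_neg_of_phi_one hx
  have h1 : F ((x : Omega L), x) = (x, x) := by
    simp [F, hx, had_one]
  have h2 : F (neg x, neg x) = (neg x, neg x) := by
    simp [F, hphin, had_one]
  have hne : x ≠ neg x := neg_ne hL0 x
  have h4 : F ((x : Omega L), neg x) = (neg x, x) := by
    simp [F, hx, had_one]
  have h5 : F (neg x, (x : Omega L)) = (x, neg x) := by
    simp [F, hphin, had_one]
  refine ⟨h1, h2, ?_, h4, h5, ?_, ?_⟩
  · intro h; exact hne (congrArg Prod.fst h)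
  · show F^[2] (x, neg x) = (x, neg x)
    simp [Function.iterate_succ, Function.comp, h4, h5]
  · intro t ht1 ht2
    interval_cases t
    intro h
    rw [Function.iterate_one, h4] at h
    exact hne (Prod.ext_iff.mp h).2
end

section
/- The number of fixed points of Q2R is a square multiple of 4: for every even L ≥ 2 there exists a natural number k ≥ 1 such that |P₁| = 4k² and |P₂| = 4k²·(4k² − 1), where P₁ is the set of fixed points of F and P₂ is the set of configurations of minimal period 2 under F. -/
namespace Q2RAux

open Q2R

variable {L : ℕ}

lemma zmod2_cases (a : ZMod 2) : a = 0 ∨ a = 1 := by revert a; decide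

/-- Parity of a site. -/
def par (h2 : (2:ℕ) ∣ L) (k : Site L) : ZMod 2 := ZMod.castHom h2 (ZMod 2) (k.1 + k.2)

lemma par_add (h2 : (2:ℕ) ∣ L) (k v : Site L) :
    par h2 (k + v) = par h2 k + par h2 v := by
  unfold par
  rw [Prod.fst_add, Prod.snd_add,
    show k.1 + v.1 + (k.2 + v.2) = (k.1 + k.2) + (v.1 + v.2) by ring, map_add]

lemma par_sub (h2 : (2:ℕ) ∣ L) (k v : Site L) :
    par h2 (k - v) = par h2 k + par h2 v := by
  unfold par
  rw [Prod.fst_sub, Prod.snd_sub,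
    show k.1 - v.1 + (k.2 - v.2) = (k.1 + k.2) - (v.1 + v.2) by ring, map_sub,
    CharTwo.sub_eq_add]

lemma par_e1 (h2 : (2:ℕ) ∣ L) : par h2 ((1, 0) : Site L) = 1 := by
  show ZMod.castHom h2 (ZMod 2) (1 + 0) = 1
  rw [add_zero, map_one]

lemma par_e2 (h2 : (2:ℕ) ∣ L) : par h2 ((0, 1) : Site L) = 1 := by
  show ZMod.castHom h2 (ZMod 2) (0 + 1) = 1
  rw [zero_add, map_one]

lemma par_zero (h2 : (2:ℕ) ∣ L) : par h2 (0 : Site L) = 0 := by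
  show ZMod.castHom h2 (ZMod 2) (0 + 0) = 0
  rw [add_zero, map_zero]

/-- If two functions agree on the opposite-parity sublattice, their neighbor
sums at `k` coincide. -/
lemma nbhdSum_congr (h2 : (2:ℕ) ∣ L) {f g : Site L → ℤ} {k : Site L}
    (h : ∀ j, par h2 j = par h2 k + 1 → f j = g j) :
    nbhdSum f k = nbhdSum g k := by
  unfold nbhdSum
  rw [h _ (by rw [par_add, par_e1]), h _ (by rw [par_sub, par_e1]),
      h _ (by rw [par_add, par_e2]), h _ (by rw [par_sub, par_e2])]

lemma nbhdSum_shift (f : Site L → ℤ) (v k : Site L) :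
    nbhdSum (fun j => f (j + v)) k = nbhdSum f (k + v) := by
  unfold nbhdSum
  show f (k + (1,0) + v) + f (k - (1,0) + v) + f (k + (0,1) + v) + f (k - (0,1) + v) = _
  rw [show k + (1,0) + v = k + v + (1,0) by ring,
      show k - (1,0) + v = k + v - (1,0) by ring,
      show k + (0,1) + v = k + v + (0,1) by ring,
      show k - (0,1) + v = k + v - (0,1) by ring]

lemma nbhdSum_unshift (g : Site L → ℤ) (v k : Site L) :
    nbhdSum (fun j => g (j - v)) k = nbhdSum g (k - v) := by
  unfold nbhdSum
  show g (k + (1,0) - v) + g (k - (1,0) - v) + g (k + (0,1) - v) + g (k - (0,1) - v) = _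
  rw [show k + (1,0) - v = k - v + (1,0) by ring,
      show k - (1,0) - v = k - v - (1,0) by ring,
      show k + (0,1) - v = k - v + (0,1) by ring,
      show k - (0,1) - v = k - v - (0,1) by ring]

lemma nbhdSum_neg (f : Site L → ℤ) (k : Site L) :
    nbhdSum (fun j => -f j) k = -nbhdSum f k := by
  unfold nbhdSum; ring

lemma val_ne_zero (x : Omega L) (k : Site L) : x.1 k ≠ 0 := by
  rcases x.2 k with h | h <;> simp [h]

lemma phi_eq_one_iff (x : Omega L) : phi x = one ↔ ∀ k, nbhdSum x.1 k ≠ 0 := by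
  constructor
  · intro h k hk
    have h1 := congrFun (congrArg Subtype.val h) k
    simp only [phi, one] at h1
    rw [if_pos hk] at h1
    norm_num at h1
  · intro h
    apply Subtype.ext
    funext k
    simp only [phi, one]
    rw [if_neg (h k)]

lemma had_one (x : Omega L) : had x one = x := by
  apply Subtype.ext; funext k; simp [had, one]

lemma had_eq_self (x z : Omega L) : had x z = x ↔ z = one := by
  constructor
  · intro h
    apply Subtype.ext; funext k
    have hk := congrFun (congrArg Subtype.val h) k
    simp only [had] at hk
    show z.1 k = 1
    rcases x.2 k with h1 | h1 <;> rw [h1] at hk <;> omega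
  · rintro rfl; exact had_one x

lemma F_fix_iff (p : Omega L × Omega L) :
    F p = p ↔ phi p.1 = one ∧ p.1 = p.2 := by
  constructor
  · intro h
    have h2 : p.1 = p.2 := congrArg Prod.snd h
    have h1 : had p.2 (phi p.1) = p.1 := congrArg Prod.fst h
    rw [← h2] at h1
    exact ⟨(had_eq_self _ _).mp h1, h2⟩
  · rintro ⟨h1, h2⟩
    show (had p.2 (phi p.1), p.1) = p
    rw [h1, had_one, ← h2]
    exact Prod.ext rfl h2

lemma F_swap (p : Omega L × Omega L) (h : phi p.1 = one) :
    F p = (p.2, p.1) := by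
  show (had p.2 (phi p.1), p.1) = (p.2, p.1)
  rw [h, had_one]

lemma isMinPeriod_two_iff (p : Omega L × Omega L) :
    IsMinPeriod p 2 ↔ phi p.1 = one ∧ phi p.2 = one ∧ p.1 ≠ p.2 := by
  have hit2 : F^[2] p = F (F p) := by
    rw [Function.iterate_succ_apply', Function.iterate_one]
  constructor
  · rintro ⟨h2it, hmin⟩
    have hne : F p ≠ p := by simpa using hmin 1 one_pos one_lt_two
    have hFF : F (F p) = p := by rw [← hit2]; exact h2it
    have hsnd : had p.2 (phi p.1) = p.2 := congrArg Prod.snd hFF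
    have hphi1 : phi p.1 = one := (had_eq_self _ _).mp hsnd
    rw [F_swap p hphi1] at hFF hne
    have hfst : had p.1 (phi p.2) = p.1 := congrArg Prod.fst hFF
    have hphi2 : phi p.2 = one := (had_eq_self _ _).mp hfst
    refine ⟨hphi1, hphi2, fun hxy => hne ?_⟩
    exact Prod.ext hxy.symm hxy
  · rintro ⟨h1, h2, hne⟩
    have hswap : F p = (p.2, p.1) := F_swap p h1
    constructor
    · rw [hit2, hswap, F_swap (p.2, p.1) h2]
    · intro t ht1 ht2
      interval_cases t
      rw [Function.iterate_one, hswap]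
      intro h
      exact hne (congrArg Prod.snd h)

/-! Splitting into sublattices. -/

/-- States with no null neighborhood: the set counted by `P₁`. -/
abbrev SGood (L : ℕ) : Type := {x : Omega L // ∀ k, nbhdSum x.1 k ≠ 0}

/-- States that are `1` on the odd sublattice and have no null neighborhood
at odd sites. -/
abbrev AOdd (h2 : (2:ℕ) ∣ L) : Type :=
  {x : Omega L // (∀ k, par h2 k = 1 → x.1 k = 1) ∧
    ∀ k, par h2 k = 1 → nbhdSum x.1 k ≠ 0}

/-- Elements of `AOdd` normalized at the origin. -/
abbrev AOdd0 (h2 : (2:ℕ) ∣ L) : Type := {x : AOdd h2 // x.1.1 0 = 1}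

def mkEven (h2 : (2:ℕ) ∣ L) (x : Omega L) : Omega L :=
  ⟨fun k => if par h2 k = 1 then 1 else x.1 k, fun k => by
    dsimp only
    split
    · exact Or.inl rfl
    · exact x.2 k⟩

def mkOdd (h2 : (2:ℕ) ∣ L) (x : Omega L) : Omega L :=
  ⟨fun k => if par h2 k = 1 then 1 else x.1 (k + (1, 0)), fun k => by
    dsimp only
    split
    · exact Or.inl rfl
    · exact x.2 _⟩

def glue (h2 : (2:ℕ) ∣ L) (f g : Omega L) : Omega L :=
  ⟨fun k => if par h2 k = 1 then g.1 (k - (1, 0)) else f.1 k, fun k => by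
    dsimp only
    split
    · exact g.2 _
    · exact f.2 k⟩

lemma parsucc_ne_one (h2 : (2:ℕ) ∣ L) {k j : Site L}
    (hk : par h2 k = 1) (hj : par h2 j = par h2 k + 1) : ¬ par h2 j = 1 := by
  rw [hj, hk]; decide

lemma parsucc_eq_one (h2 : (2:ℕ) ∣ L) {k j : Site L}
    (hk : ¬ par h2 k = 1) (hj : par h2 j = par h2 k + 1) : par h2 j = 1 := by
  rcases zmod2_cases (par h2 k) with h | h
  · rw [hj, h]; decide
  · exact absurd h hk

/-- The splitting equivalence `S ≃ A × A`. -/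
def splitEquiv (h2 : (2:ℕ) ∣ L) : SGood L ≃ AOdd h2 × AOdd h2 where
  toFun x :=
    (⟨mkEven h2 x.1, fun k hk => if_pos hk, fun k hk => by
      have : nbhdSum (mkEven h2 x.1).1 k = nbhdSum x.1.1 k :=
        nbhdSum_congr h2 (fun j hj => if_neg (parsucc_ne_one h2 hk hj))
      rw [this]; exact x.2 k⟩,
     ⟨mkOdd h2 x.1, fun k hk => if_pos hk, fun k hk => by
      have h1 : nbhdSum (mkOdd h2 x.1).1 k =
          nbhdSum (fun j => x.1.1 (j + (1, 0))) k :=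
        nbhdSum_congr h2 (fun j hj => if_neg (parsucc_ne_one h2 hk hj))
      rw [h1, nbhdSum_shift]; exact x.2 _⟩)
  invFun fg :=
    ⟨glue h2 fg.1.1 fg.2.1, fun k => by
      by_cases hk : par h2 k = 1
      · have : nbhdSum (glue h2 fg.1.1 fg.2.1).1 k = nbhdSum fg.1.1.1 k :=
          nbhdSum_congr h2 (fun j hj => if_neg (parsucc_ne_one h2 hk hj))
        rw [this]; exact fg.1.2.2 k hk
      · have h1 : nbhdSum (glue h2 fg.1.1 fg.2.1).1 k =
            nbhdSum (fun j => fg.2.1.1 (j - (1, 0))) k :=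
          nbhdSum_congr h2 (fun j hj => if_pos (parsucc_eq_one h2 hk hj))
        rw [h1, nbhdSum_unshift]
        refine fg.2.2.2 _ ?_
        rw [par_sub, par_e1]
        rcases zmod2_cases (par h2 k) with h | h
        · rw [h]; decide
        · exact absurd h hk⟩
  left_inv x := by
    apply Subtype.ext; apply Subtype.ext; funext k
    show (if par h2 k = 1 then
      (if par h2 (k - (1,0)) = 1 then 1 else x.1.1 (k - (1,0) + (1,0)))
      else (if par h2 k = 1 then 1 else x.1.1 k)) = x.1.1 k
    by_cases hk : par h2 k = 1
    · rw [if_pos hk, if_neg, sub_add_cancel]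
      rw [par_sub, par_e1, hk]; decide
    · rw [if_neg hk, if_neg hk]
  right_inv fg := by
    apply Prod.ext
    · apply Subtype.ext; apply Subtype.ext; funext k
      show (if par h2 k = 1 then 1 else
        (if par h2 k = 1 then fg.2.1.1 (k - (1,0)) else fg.1.1.1 k)) = fg.1.1.1 k
      by_cases hk : par h2 k = 1
      · rw [if_pos hk, (fg.1.2.1 k hk)]
      · rw [if_neg hk, if_neg hk]
    · apply Subtype.ext; apply Subtype.ext; funext k
      show (if par h2 k = 1 then 1 else
        (if par h2 (k + (1,0)) = 1 then fg.2.1.1 (k + (1,0) - (1,0))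
          else fg.1.1.1 (k + (1,0)))) = fg.2.1.1 k
    
      by_cases hk : par h2 k = 1
      · rw [if_pos hk, (fg.2.2.1 k hk)]
      · rw [if_neg hk, if_pos, add_sub_cancel_right]
        exact parsucc_eq_one h2 hk (by rw [par_add, par_e1])

def flipE (h2 : (2:ℕ) ∣ L) (x : Omega L) : Omega L :=
  ⟨fun k => if par h2 k = 1 then x.1 k else -x.1 k, fun k => by
    dsimp only
    split
    · exact x.2 k
    · rcases x.2 k with h | h
      · right; rw [h]
      · left; rw [h]; ring⟩

lemma flipE_mem (h2 : (2:ℕ) ∣ L) (x : AOdd h2) :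
    (∀ k, par h2 k = 1 → (flipE h2 x.1).1 k = 1) ∧
      ∀ k, par h2 k = 1 → nbhdSum (flipE h2 x.1).1 k ≠ 0 := by
  constructor
  · intro k hk; show (if par h2 k = 1 then _ else _) = 1
    rw [if_pos hk]; exact x.2.1 k hk
  · intro k hk
    have h1 : nbhdSum (flipE h2 x.1).1 k = nbhdSum (fun j => -x.1.1 j) k :=
      nbhdSum_congr h2 (fun j hj => if_neg (parsucc_ne_one h2 hk hj))
    rw [h1, nbhdSum_neg]
    simpa using x.2.2 k hk

def iotaA (h2 : (2:ℕ) ∣ L) (x : AOdd h2) : AOdd h2 :=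
  ⟨flipE h2 x.1, flipE_mem h2 x⟩

lemma iotaA_invol (h2 : (2:ℕ) ∣ L) (x : AOdd h2) : iotaA h2 (iotaA h2 x) = x := by
  apply Subtype.ext; apply Subtype.ext; funext k
  show (if par h2 k = 1 then (if par h2 k = 1 then x.1.1 k else -x.1.1 k)
    else -(if par h2 k = 1 then x.1.1 k else -x.1.1 k)) = x.1.1 k
  by_cases hk : par h2 k = 1
  · rw [if_pos hk, if_pos hk]
  · rw [if_neg hk, if_neg hk, neg_neg]

lemma iotaA_zero (h2 : (2:ℕ) ∣ L) (x : AOdd h2) :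
    (iotaA h2 x).1.1 0 = -x.1.1 0 := by
  show (if par h2 (0 : Site L) = 1 then _ else _) = _
  rw [if_neg]
  rw [par_zero]; decide

/-- The halving equivalence `A ≃ Bool × A₀`. -/
def halfEquiv (h2 : (2:ℕ) ∣ L) : AOdd h2 ≃ Bool × AOdd0 h2 where
  toFun x :=
    if h : x.1.1 0 = 1 then (true, ⟨x, h⟩)
    else (false, ⟨iotaA h2 x, by
      rw [iotaA_zero]
      rcases x.1.2 0 with h1 | h1
      · exact absurd h1 h
      · rw [h1]; ring⟩)
  invFun by_ := if by_.1 then by_.2.1 else iotaA h2 by_.2.1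
  left_inv x := by
    dsimp only
    by_cases h : x.1.1 0 = 1
    · rw [dif_pos h]
      rfl
    · rw [dif_neg h]
      show iotaA h2 (iotaA h2 x) = x
      exact iotaA_invol h2 x
  right_inv by_ := by
    obtain ⟨b, y⟩ := by_
    cases b
    · show (if h : (iotaA h2 y.1).1.1 0 = 1 then ((true, ⟨iotaA h2 y.1, h⟩) : Bool × AOdd0 h2)
        else (false, ⟨iotaA h2 (iotaA h2 y.1), _⟩)) = (false, y)
      rw [dif_neg]
      · refine Prod.ext rfl ?_
        apply Subtype.ext
        exact iotaA_invol h2 y.1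
      · rw [iotaA_zero, y.2]; norm_num
    · show (if h : y.1.1.1 0 = 1 then ((true, ⟨y.1, h⟩) : Bool × AOdd0 h2)
        else (false, ⟨iotaA h2 y.1, _⟩)) = (true, y)
      rw [dif_pos y.2]

/-! Finiteness and cardinalities. -/

lemma omega_finite (hL : L ≠ 0) : Finite (Omega L) := by
  haveI : NeZero L := ⟨hL⟩
  apply Finite.of_injective (fun x : Omega L => (fun k => x.1 k = 1 : Site L → Prop))
  intro x y h
  apply Subtype.ext; funext k
  have hk : (x.1 k = 1) ↔ (y.1 k = 1) := by
    rw [iff_iff_eq]; exact congrFun h k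
  rcases x.2 k with h1 | h1 <;> rcases y.2 k with h2 | h2 <;>
    rw [h1, h2] <;> rw [h1, h2] at hk <;> simp_all

lemma card_offdiag (α : Type*) [Finite α] :
    Nat.card {q : α × α // q.1 ≠ q.2} = Nat.card α * Nat.card α - Nat.card α := by
  classical
  have e := Equiv.sumCompl (fun q : α × α => q.1 = q.2)
  have h1 : Nat.card {q : α × α // q.1 = q.2} +
      Nat.card {q : α × α // q.1 ≠ q.2} = Nat.card α * Nat.card α := by
    rw [← Nat.card_sum, Nat.card_congr e, Nat.card_prod]
  have h2 : Nat.card {q : α × α // q.1 = q.2} = Nat.card α := by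
    refine Nat.card_congr ⟨fun q => q.1.1, fun a => ⟨(a, a), rfl⟩, fun q => ?_, fun a => rfl⟩
    apply Subtype.ext
    exact Prod.ext rfl q.2
  rw [h2] at h1
  omega

end Q2RAux


namespace Q2RAux

open Q2R

variable {L : ℕ}

/-- Fixed points correspond to good states. -/
def fixEquiv : {p : Omega L × Omega L // F p = p} ≃ SGood L where
  toFun p := ⟨p.1.1, (phi_eq_one_iff _).mp ((F_fix_iff p.1).mp p.2).1⟩
  invFun x := ⟨(x.1, x.1), (F_fix_iff _).mpr ⟨(phi_eq_one_iff _).mpr x.2, rfl⟩⟩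
  left_inv p := by
    apply Subtype.ext
    exact Prod.ext rfl ((F_fix_iff p.1).mp p.2).2
  right_inv x := rfl

/-- Minimal period 2 configurations correspond to distinct pairs of good
states. -/
def per2Equiv : {p : Omega L × Omega L // IsMinPeriod p 2} ≃
    {q : SGood L × SGood L // q.1 ≠ q.2} where
  toFun p :=
    ⟨(⟨p.1.1, (phi_eq_one_iff _).mp ((isMinPeriod_two_iff p.1).mp p.2).1⟩,
      ⟨p.1.2, (phi_eq_one_iff _).mp ((isMinPeriod_two_iff p.1).mp p.2).2.1⟩),
     fun h => ((isMinPeriod_two_iff p.1).mp p.2).2.2 (congrArg Subtype.val h)⟩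
  invFun q := ⟨(q.1.1.1, q.1.2.1), (isMinPeriod_two_iff _).mpr
    ⟨(phi_eq_one_iff _).mpr q.1.1.2, (phi_eq_one_iff _).mpr q.1.2.2,
     fun h => q.2 (Subtype.ext h)⟩⟩
  left_inv p := rfl
  right_inv q := rfl

end Q2RAux

open Q2R

open Q2RAux

/-- The number of fixed points of Q2R is `4k²` for some `k ≥ 1`, and
`|P₂| = 4k²(4k² − 1)`. -/
theorem q2r_card_P1_square (L : ℕ) (hL : 2 ≤ L) (hE : Even L) :
    ∃ k : ℕ, 1 ≤ k ∧
      Nat.card {p : Omega L × Omega L | F p = p} = 4 * k ^ 2 ∧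
      Nat.card {p : Omega L × Omega L | IsMinPeriod p 2} =
        4 * k ^ 2 * (4 * k ^ 2 - 1) := by
  classical
  haveI : Finite (Omega L) := omega_finite (by omega)
  have h2 : (2 : ℕ) ∣ L := hE.two_dvd
  set k := Nat.card (AOdd0 h2) with hkdef
  haveI : Nonempty (AOdd0 h2) := by
    refine ⟨⟨⟨one, fun kk _ => rfl, fun kk _ => ?_⟩, rfl⟩⟩
    show (1 : ℤ) + 1 + 1 + 1 ≠ 0
    norm_num
  have hk1 : 1 ≤ k := Nat.card_pos
  have hbool : Nat.card Bool = 2 := by simp [Nat.card_eq_fintype_card]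
  have hA : Nat.card (AOdd h2) = 2 * k := by
    rw [Nat.card_congr (halfEquiv h2), Nat.card_prod, hbool]
  have hS : Nat.card (SGood L) = 4 * k ^ 2 := by
    rw [Nat.card_congr (splitEquiv h2), Nat.card_prod, hA]
    ring
  have hP1 : Nat.card {p : Omega L × Omega L | F p = p} = Nat.card (SGood L) :=
    Nat.card_congr fixEquiv
  have hP2 : Nat.card {p : Omega L × Omega L | IsMinPeriod p 2} =
      Nat.card {q : SGood L × SGood L // q.1 ≠ q.2} :=
    Nat.card_congr per2Equiv
  have hmm : ∀ m : ℕ, m * m - m = m * (m - 1) := by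
    intro m
    cases m with
    | zero => simp
    | succ n => rw [Nat.succ_sub_one, Nat.mul_succ, Nat.add_sub_cancel]
  refine ⟨k, hk1, by rw [hP1, hS], ?_⟩
  rw [hP2, card_offdiag, hS, hmm]
end
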